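/- arXiv:2106.01173 — 2 statements merged into one kernel-verified Lean document; each statement's English description precedes it below -/
import Mathlib

section
/- For every k ≥ 0, the period-doubling sequence S_k is primitive, i.e., S_k cannot be written as x^j for any string x and integer j ≥ 2. -/
/-- The morphism φ: a ↦ ab, b ↦ aa, with `false = a`, `true = b`. -/
def pdPhi (c : Bool) : List Bool := if c then [false, false] else [false, true]

/-- The k-th period-doubling sequence. -/
def pd : ℕ → List Bool
  | 0 => [false]
  | k + 1 => (pd k).flatMap pdPhi

/-- `hat w` : `w` with its last character flipped. -/
def hat (w : List Bool) : List Bool := w.dropLast ++ (w.getLast?.map Bool.not).toList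

/-- A string is primitive if it is not a proper power `x^j` with `j ≥ 2`. -/
def Primitive {α : Type*} (w : List α) : Prop :=
  ∀ (x : List α) (j : ℕ), 2 ≤ j → w ≠ (List.replicate j x).flatten

/-!
Flipping the last letter commutes with φ, because φ(b) is φ(a) with its last letter flipped;
hence `S_{k+1} = S_k · hat S_k`. If `S_{k+1} = x ^ j` with `j ≥ 2`, then `j` divides
`|S_{k+1}| = 2 ^ (k + 1)`, so `j` is even and both halves of `S_{k+1}` equal `x ^ (j / 2)`.
This forces `hat S_k = S_k`, which is absurd. `S_0` is a single letter.
-/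

theorem Nat.even_of_dvd_two_pow {j n : ℕ} (hj : j ≠ 1) (h : j ∣ 2 ^ n) : Even j := by
  obtain ⟨e, -, rfl⟩ := (Nat.dvd_prime_pow Nat.prime_two).1 h
  exact Nat.even_pow.2 ⟨even_two, by rintro rfl; exact hj rfl⟩

theorem length_flatten_replicate {α : Type*} (j : ℕ) (x : List α) :
    (List.replicate j x).flatten.length = j * x.length := by
  simp [List.length_flatten]

theorem hat_append {u v : List Bool} (hv : v ≠ []) : hat (u ++ v) = u ++ hat v := by
  rw [hat, hat, List.dropLast_append_of_ne_nil hv, List.getLast?_append_of_ne_nil _ hv,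
    List.append_assoc]

theorem hat_append_singleton (u : List Bool) (c : Bool) : hat (u ++ [c]) = u ++ [!c] := by
  rw [hat_append (List.cons_ne_nil c [])]
  rfl

theorem length_hat (w : List Bool) : (hat w).length = w.length := by
  rcases w.eq_nil_or_concat with rfl | ⟨u, c, rfl⟩
  · rfl
  · simp [hat_append_singleton]

theorem hat_ne_self {w : List Bool} (hw : w ≠ []) : hat w ≠ w := by
  obtain ⟨u, c, rfl⟩ := w.eq_nil_or_concat.resolve_left hw
  simp [hat_append_singleton]

theorem hat_flatMap {f : Bool → List Bool} (hf_ne : ∀ c, f c ≠ []) (hf : ∀ c, f (!c) = hat (f c))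
    (w : List Bool) : hat (w.flatMap f) = (hat w).flatMap f := by
  rcases w.eq_nil_or_concat with rfl | ⟨u, c, rfl⟩
  · rfl
  · simp only [List.concat_eq_append, hat_append_singleton, List.flatMap_append,
      List.flatMap_singleton, hat_append (hf_ne c), hf]

theorem append_hat_ne_flatten_replicate {u : List Bool} (hu : u ≠ []) (x : List Bool) {j : ℕ}
    (hj : Even j) : u ++ hat u ≠ (List.replicate j x).flatten := by
  obtain ⟨m, rfl⟩ := hj
  intro h
  rw [List.replicate_add, List.flatten_append] at h
  have hlen : u.length = (List.replicate m x).flatten.length := by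
    have := congrArg List.length h
    simp only [List.length_append, length_hat] at this
    omega
  obtain ⟨rfl, hhat⟩ := List.append_inj h hlen
  exact hat_ne_self hu hhat

theorem pd_succ (k : ℕ) : pd (k + 1) = pd k ++ hat (pd k) := by
  induction k with
  | zero => rfl
  | succ k ih =>
    have hφ_ne : ∀ c, pdPhi c ≠ [] := by decide
    have hφ : ∀ c, pdPhi (!c) = hat (pdPhi c) := by decide
    change (pd (k + 1)).flatMap pdPhi = _
    conv_lhs => rw [ih, List.flatMap_append, ← hat_flatMap hφ_ne hφ]
    rfl

theorem length_pd (k : ℕ) : (pd k).length = 2 ^ k := by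
  induction k with
  | zero => rfl
  | succ k ih => rw [pd_succ, List.length_append, length_hat, ih, pow_succ, mul_two]

theorem pd_ne_nil (k : ℕ) : pd k ≠ [] :=
  List.ne_nil_of_length_pos (length_pd k ▸ Nat.two_pow_pos k)

theorem pd_primitive (k : ℕ) : Primitive (pd k) := by
  intro x j hj hpow
  have hdvd : j ∣ 2 ^ k := ⟨x.length, by rw [← length_pd, hpow, length_flatten_replicate]⟩
  cases k with
  | zero => exact absurd (Nat.dvd_one.1 hdvd) (by omega)
  | succ k =>
    rw [pd_succ] at hpow
    exact append_hat_ne_flatten_replicate (pd_ne_nil k) x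
      (Nat.even_of_dvd_two_pow (by omega) hdvd) hpow
end

section
/- For every k ≥ 2, the string A_k occurs exactly 3 times as a substring of S_k = A_k B_k A_k A_k, where A_k = S_{k-2} and B_k = Â_k. -/
/-- `y` occurs in `w` at (0-based) position `i`. -/
def OccAt {α : Type*} (y w : List α) (i : ℕ) : Prop :=
  i + y.length ≤ w.length ∧ (w.drop i).take y.length = y

/-- The number of occurrences (starting positions) of `y` in `w`. -/
def occCount {α : Type*} [DecidableEq α] (y w : List α) : ℕ :=
  ((List.range (w.length + 1)).filter
    (fun i => decide (i + y.length ≤ w.length ∧ (w.drop i).take y.length = y))).length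

/-
`S_{m+1} = φ(S_m)` and every block `φ(c)` starts with `a`, so `φ(v)` has `a` at every
even position, while `φ(u)` (for `u` beginning with `a`) has `b` at position 1. Hence `φ(u)` can only
occur in `φ(v)` at even positions `2i`, and since `φ` is injective and maps position `i` to `2i`,
these are exactly the images of the occurrences of `u` in `v`. Thus the number of occurrences of
`S_m` in `S_{m+2}` does not depend on `m`; for `m = 0` it counts the letters `a` in `abaa`.
-/

lemma length_flatMap_pdPhi (l : List Bool) : (l.flatMap pdPhi).length = 2 * l.length := by
  induction l with
  | nil => rfl
  | cons c t ih => cases c <;> simp [pdPhi, ih] <;> ring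

lemma drop_two_mul_flatMap_pdPhi (i : ℕ) (l : List Bool) :
    (l.flatMap pdPhi).drop (2 * i) = (l.drop i).flatMap pdPhi := by
  induction i generalizing l with
  | zero => simp
  | succ i ih =>
    cases l with
    | nil => simp
    | cons c t => cases c <;> simp [pdPhi, Nat.mul_succ, ← ih t]

lemma take_two_mul_flatMap_pdPhi (i : ℕ) (l : List Bool) :
    (l.flatMap pdPhi).take (2 * i) = (l.take i).flatMap pdPhi := by
  induction i generalizing l with
  | zero => simp
  | succ i ih =>
    cases l with
    | nil => simp
    | cons c t => cases c <;> simp [pdPhi, Nat.mul_succ, ← ih t]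

lemma flatMap_pdPhi_injective : Function.Injective (List.flatMap pdPhi) := by
  intro l₁
  induction l₁ with
  | nil => rintro (_ | ⟨_ | _, _⟩) h <;> simp_all [pdPhi]
  | cons c t ih =>
    rintro (_ | ⟨c', t'⟩) h
    · cases c <;> simp [pdPhi] at h
    · cases c <;> cases c' <;> simp [pdPhi] at h <;> simp [ih h]

lemma getElem?_two_mul_flatMap_pdPhi (v : List Bool) (j : ℕ) :
    (v.flatMap pdPhi)[2 * j]? = v[j]?.map fun _ => false := by
  rw [← List.head?_drop, drop_two_mul_flatMap_pdPhi, ← List.head?_drop]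
  rcases v.drop j with _ | ⟨_ | _, _⟩ <;> rfl

lemma occAt_two_mul_flatMap_pdPhi_iff (u v : List Bool) (i : ℕ) :
    OccAt (u.flatMap pdPhi) (v.flatMap pdPhi) (2 * i) ↔ OccAt u v i := by
  simp only [OccAt, length_flatMap_pdPhi, drop_two_mul_flatMap_pdPhi,
    take_two_mul_flatMap_pdPhi, flatMap_pdPhi_injective.eq_iff]
  exact and_congr_left' (by omega)

lemma not_occAt_two_mul_add_one_flatMap_pdPhi (t v : List Bool) (i : ℕ) :
    ¬ OccAt ((false :: t).flatMap pdPhi) (v.flatMap pdPhi) (2 * i + 1) := by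
  rintro ⟨-, hocc⟩
  have hb := congrArg (·[1]?) hocc
  simp only [List.getElem?_take, List.getElem?_drop, show 2 * i + 1 + 1 = 2 * (i + 1) by ring,
    getElem?_two_mul_flatMap_pdPhi] at hb
  split_ifs at hb <;> simp [pdPhi] at hb

lemma countP_range_two_mul_add_one {p q : ℕ → Prop} [DecidablePred p] [DecidablePred q]
    (heven : ∀ i, q (2 * i) ↔ p i) (hodd : ∀ i, ¬ q (2 * i + 1)) (n : ℕ) :
    (List.range (2 * n + 1)).countP (fun j => q j) = (List.range (n + 1)).countP (fun i => p i) := by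
  induction n with
  | zero => simp [List.range_succ, heven 0]
  | succ n ih =>
    rw [show 2 * (n + 1) + 1 = 2 * n + 1 + 1 + 1 by ring, List.range_succ, List.range_succ,
      List.range_succ (n := n + 1)]
    simp [List.countP_append, ih, hodd n, ← heven (n + 1), Nat.mul_succ]

instance {α : Type*} [DecidableEq α] (y w : List α) : DecidablePred (OccAt y w) :=
  fun _ => inferInstanceAs (Decidable (_ ∧ _))

lemma occCount_eq_countP_occAt {α : Type*} [DecidableEq α] (y w : List α) :
    occCount y w = (List.range (w.length + 1)).countP fun i => OccAt y w i := by
  rw [occCount, List.countP_eq_length_filter]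
  rfl

lemma occCount_flatMap_pdPhi (t v : List Bool) :
    occCount ((false :: t).flatMap pdPhi) (v.flatMap pdPhi) = occCount (false :: t) v := by
  rw [occCount_eq_countP_occAt, occCount_eq_countP_occAt, length_flatMap_pdPhi]
  exact countP_range_two_mul_add_one (occAt_two_mul_flatMap_pdPhi_iff _ _)
    (not_occAt_two_mul_add_one_flatMap_pdPhi t v) v.length

lemma pd_succ_s7 (m : ℕ) : pd (m + 1) = (pd m).flatMap pdPhi := rfl

lemma exists_pd_eq_false_cons (m : ℕ) : ∃ t, pd m = false :: t := by
  induction m with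
  | zero => exact ⟨[], rfl⟩
  | succ m ih =>
    obtain ⟨t, ht⟩ := ih
    exact ⟨true :: t.flatMap pdPhi, by simp [pd_succ_s7, ht, pdPhi]⟩

lemma occCount_pd_pd_add_two (m : ℕ) : occCount (pd m) (pd (m + 2)) = 3 := by
  induction m with
  | zero => decide
  | succ m ih =>
    obtain ⟨t, ht⟩ := exists_pd_eq_false_cons m
    rw [pd_succ_s7, pd_succ_s7 (m + 2), ht, occCount_flatMap_pdPhi, ← ht, ih]

theorem pd_three_occurrences (k : ℕ) (hk : 2 ≤ k) :
    occCount (pd (k-2)) (pd k) = 3 := by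
  obtain ⟨m, rfl⟩ : ∃ m, k = m + 2 := ⟨k - 2, by omega⟩
  simpa using occCount_pd_pd_add_two m
end
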